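/- Monotonicity of broadcast networks over cliques: if θ₁ →ₐ θ₂ is a broadcast step between S-labeled cliques and θ₁ ⊑ θ₁' where θ₁' is a clique of the same size (so h is a bijection), then there exists a clique θ₂' with θ₁' →ₐ θ₂' and θ₂ ⊑ θ₂'. -/
import Mathlib


/-- Labels of a broadcast process: broadcast `!!a` or receive `??a`. -/
inductive Lbl (A : Type*) where
  | bcast (a : A)
  | recv (a : A)

/-- Compatibility of a quasi-order with a labelled transition relation. -/
def Compatible {S A : Type*} (R : S → Lbl A → S → Prop) (le : S → S → Prop) : Prop :=
  ∀ (l : Lbl A) (s₁ t₁ s₂ : S), le s₁ t₁ → R s₁ l s₂ → ∃ t₂ : S, R t₁ l t₂ ∧ le s₂ t₂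

/-- A broadcast step of letter `a` on an `S`-labeled clique on `n` vertices:
some vertex broadcasts `!!a` and every other vertex receives `??a`. -/
def CliqueStep {S A : Type*} {n : ℕ} (R : S → Lbl A → S → Prop)
    (a : A) (L L' : Fin n → S) : Prop :=
  ∃ v : Fin n, R (L v) (Lbl.bcast a) (L' v) ∧
    ∀ u : Fin n, u ≠ v → R (L u) (Lbl.recv a) (L' u)

/-- Monotonicity of broadcast networks over cliques of the same size. -/
theorem clique_broadcast_monotone {S A : Type*} {n : ℕ}
    (R : S → Lbl A → S → Prop) (le : S → S → Prop)
    (hcompat : Compatible R le)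
    (a : A) (L₁ L₂ L₁' : Fin n → S)
    (hstep : CliqueStep R a L₁ L₂)
    (h : Fin n ≃ Fin n)
    (hlab : ∀ v : Fin n, le (L₁ v) (L₁' (h v))) :
    ∃ L₂' : Fin n → S, CliqueStep R a L₁' L₂' ∧
      ∀ v : Fin n, le (L₂ v) (L₂' (h v)) := by
  obtain ⟨v, hv, hu⟩ := hstep
  have key : ∀ w : Fin n, ∃ t : S,
      R (L₁' w) (if w = h v then Lbl.bcast a else Lbl.recv a) t ∧
        le (L₂ (h.symm w)) t := by
    intro w
    by_cases hw : w = h v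
    · subst hw
      simpa using hcompat (Lbl.bcast a) (L₁ v) (L₁' (h v)) (L₂ v) (hlab v) hv
    · have hne : h.symm w ≠ v := by
        intro hc; apply hw; rw [← hc, Equiv.apply_symm_apply]
      have := hcompat (Lbl.recv a) (L₁ (h.symm w)) (L₁' w) (L₂ (h.symm w))
        (by simpa using hlab (h.symm w)) (hu _ hne)
      simpa [hw] using this
  choose L₂' hR hle using key
  refine ⟨L₂', ⟨h v, ?_, ?_⟩, ?_⟩
  · have := hR (h v); simpa using this
  · intro u hu'
    have := hR u
    simpa [hu'] using this
  · intro w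
    have := hle (h w)
    simpa using this
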